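/- Corollary 6.1: let m ≥ 2 and let n be the least natural number (n ≥ 1) with G(n, m) = 0. Then n = 2·n₁ for some n₁ ≥ 2, and for every k with n₁ ≤ k < n one has G(k, m) = n − k. -/

import Mathlib

/-!
Base change never decreases a number and strictly increases any number that is at least the
base. So as long as `G k m > k` the sequence cannot drop below `k + 1`; at the first `k₀` with
`G k₀ m ≤ k₀` the previous term must have been exactly the base `k₀`, which is bumped to
`k₀ + 1`, so `G k₀ m = k₀`. From then on the term is a single digit, untouched by base change,
so it falls by one per step and first vanishes at `2 * k₀`.
-/

/-- `hsub b u m` substitutes the value `u` for the base `b` throughout the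
hereditary base-`b` representation of `m` (with `hsub b u 0 = 0`). -/
def hsub (b u : ℕ) (m : ℕ) : ℕ :=
  if m = 0 then 0
  else
    u ^ hsub b u (Nat.log b m) * (m / b ^ Nat.log b m) + hsub b u (m % b ^ Nat.log b m)
termination_by m
decreasing_by
  · exact Nat.log_lt_self b (by assumption)
  · have hpos : 0 < b ^ Nat.log b m := by
      rcases Nat.eq_zero_or_pos b with hb | hb
      · simp [hb]
      · exact Nat.pow_pos hb
    exact lt_of_lt_of_le (Nat.mod_lt _ hpos) (Nat.pow_log_le_self b (by assumption))

/-- Goodstein's base-change ("bumping") function: replace the base `b` by `b + 1`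
throughout the hereditary base-`b` representation of `m` (with `B b 0 = 0`). -/
def B (b m : ℕ) : ℕ := hsub b (b + 1) m

/-- The Goodstein sequence of `m`: `G 1 m = m`, and `G (k+1) m = B (k+1) (G k m) - 1`
for `k ≥ 1` (truncated subtraction), so the `k`-th term is written in hereditary
base `k + 1`. -/
def G : ℕ → ℕ → ℕ
  | 0, m => m
  | 1, m => m
  | (k + 2), m => B (k + 2) (G (k + 1) m) - 1

/-- The auxiliary Goodstein-type sequence: `L 1 k = k ^ k` (written in hereditary
base `k`), and `L (n+1) k = B (k+n-1) (L n k) - 1` for `n ≥ 1` (truncated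
subtraction), so the `n`-th term is written in hereditary base `k + n - 1`. -/
def L : ℕ → ℕ → ℕ
  | 0, k => k ^ k
  | 1, k => k ^ k
  | (n + 2), k => B (k + n) (L (n + 1) k) - 1

/-- `O b m` is the ordinal obtained by substituting `ω` for the base `b`
throughout the hereditary base-`b` representation of `m` (with `O b 0 = 0`). -/
noncomputable def O (b : ℕ) (m : ℕ) : Ordinal :=
  if m = 0 then 0
  else
    Ordinal.omega0 ^ O b (Nat.log b m) * ((m / b ^ Nat.log b m : ℕ) : Ordinal)
      + O b (m % b ^ Nat.log b m)
termination_by m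
decreasing_by
  · exact Nat.log_lt_self b (by assumption)
  · have hpos : 0 < b ^ Nat.log b m := by
      rcases Nat.eq_zero_or_pos b with hb | hb
      · simp [hb]
      · exact Nat.pow_pos hb
    exact lt_of_lt_of_le (Nat.mod_lt _ hpos) (Nat.pow_log_le_self b (by assumption))

lemma hsub_zero (b u : ℕ) : hsub b u 0 = 0 := by
  rw [hsub]; simp

lemma hsub_of_lt {b u m : ℕ} (h : m < b) : hsub b u m = m := by
  rcases Nat.eq_zero_or_pos m with rfl | hm
  · exact hsub_zero b u
  · have hlog : Nat.log b m = 0 := Nat.log_eq_zero_iff.2 (Or.inl h)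
    rw [hsub]
    simp [hm.ne', hlog, hsub_zero, Nat.mod_one]

lemma le_hsub {b u : ℕ} (hb : 2 ≤ b) (hbu : b ≤ u) (m : ℕ) : m ≤ hsub b u m := by
  induction m using Nat.strong_induction_on with
  | _ m ih =>
    rcases lt_or_ge m b with h | h
    · rw [hsub_of_lt h]
    have hm0 : m ≠ 0 := by omega
    set e := Nat.log b m
    have hpow : 0 < b ^ e := Nat.pow_pos (by omega)
    have hple : b ^ e ≤ m := Nat.pow_log_le_self b hm0
    have hexp : b ^ e ≤ u ^ hsub b u e :=
      (Nat.pow_le_pow_left hbu e).trans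
        (Nat.pow_le_pow_right (by omega) (ih e (Nat.log_lt_self b hm0)))
    have hrem : m % b ^ e ≤ hsub b u (m % b ^ e) :=
      ih _ ((Nat.mod_lt _ hpow).trans_le hple)
    rw [hsub, if_neg hm0]
    calc m = b ^ e * (m / b ^ e) + m % b ^ e := (Nat.div_add_mod m (b ^ e)).symm
      _ ≤ u ^ hsub b u e * (m / b ^ e) + hsub b u (m % b ^ e) :=
        Nat.add_le_add (Nat.mul_le_mul_right _ hexp) hrem

lemma lt_hsub {b u m : ℕ} (hb : 2 ≤ b) (hbu : b < u) (hm : b ≤ m) : m < hsub b u m := by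
  have hm0 : m ≠ 0 := by omega
  set e := Nat.log b m
  have hpow : 0 < b ^ e := Nat.pow_pos (by omega)
  have hdigit : 1 ≤ m / b ^ e := (Nat.one_le_div_iff hpow).2 (Nat.pow_log_le_self b hm0)
  have hexp : b ^ e < u ^ hsub b u e :=
    (Nat.pow_lt_pow_left hbu (Nat.log_pos (by omega) hm).ne').trans_le
      (Nat.pow_le_pow_right (by omega) (le_hsub hb hbu.le e))
  have hrem : m % b ^ e ≤ hsub b u (m % b ^ e) := le_hsub hb hbu.le _
  rw [hsub, if_neg hm0]
  calc m = b ^ e * (m / b ^ e) + m % b ^ e := (Nat.div_add_mod m (b ^ e)).symm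
    _ < u ^ hsub b u e * (m / b ^ e) + hsub b u (m % b ^ e) := by
      have := Nat.mul_lt_mul_of_pos_right hexp hdigit
      omega

lemma B_of_lt {b m : ℕ} (h : m < b) : B b m = m := hsub_of_lt h

lemma lt_B {b m : ℕ} (hb : 2 ≤ b) (hm : b ≤ m) : m < B b m :=
  lt_hsub hb (Nat.lt_succ_self b) hm

lemma B_self {b : ℕ} (hb : 2 ≤ b) : B b b = b + 1 := by
  have hlog : Nat.log b b = 1 := by simpa using Nat.log_pow (show 1 < b by omega) 1
  rw [B, hsub, if_neg (by omega), hlog, hsub_of_lt (show 1 < b by omega)]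
  simp only [pow_one, Nat.div_self (show 0 < b by omega), Nat.mod_self, hsub_zero, mul_one,
    add_zero]

lemma G_succ {k : ℕ} (m : ℕ) (hk : 1 ≤ k) : G (k + 1) m = B (k + 1) (G k m) - 1 := by
  obtain ⟨k, rfl⟩ := Nat.exists_eq_add_of_le hk
  rw [Nat.add_comm 1 k]
  rfl

lemma G_succ_eq_self {k m : ℕ} (hk : 1 ≤ k) (hlt : k < G k m) (hle : G (k + 1) m ≤ k + 1) :
    G (k + 1) m = k + 1 := by
  rw [G_succ m hk] at hle ⊢
  rcases (Nat.succ_le_of_lt hlt).eq_or_lt with heq | hgt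
  · rw [← heq, B_self (by omega)]
    rfl
  · have := lt_B (show 2 ≤ k + 1 by omega) hgt.le
    omega

lemma exists_G_eq_self {m n : ℕ} (hm : 2 ≤ m) (hn1 : 1 ≤ n) (hn : G n m ≤ n) :
    ∃ k, 2 ≤ k ∧ G k m = k ∧ ∀ j, 1 ≤ j → j < k → j < G j m := by
  classical
  have hex : ∃ k, 1 ≤ k ∧ G k m ≤ k := ⟨n, hn1, hn⟩
  obtain ⟨hk1, hle⟩ := Nat.find_spec hex
  have hbefore : ∀ j, 1 ≤ j → j < Nat.find hex → j < G j m := fun j hj hlt => by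
    have := Nat.find_min hex hlt
    omega
  have hk2 : 2 ≤ Nat.find hex := by
    by_contra h
    rw [show Nat.find hex = 1 by omega] at hle
    exact absurd (show m ≤ 1 from hle) (by omega)
  obtain ⟨k, hk⟩ := Nat.exists_eq_add_of_le' hk2
  refine ⟨Nat.find hex, hk2, ?_, hbefore⟩
  rw [hk] at hle ⊢
  exact G_succ_eq_self (by omega) (hbefore _ (by omega) (by omega)) hle

lemma G_add_of_eq_self {k m : ℕ} (hk : 1 ≤ k) (hG : G k m = k) {t : ℕ} (ht : t ≤ k) :
    G (k + t) m = k - t := by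
  induction t with
  | zero => exact hG
  | succ t ih =>
    rw [← Nat.add_assoc, G_succ m (by omega), ih (by omega), B_of_lt (by omega)]
    omega

/-- **Corollary 6.1**: let `m ≥ 2` and let `n` be the least natural number
(`n ≥ 1`) with `G n m = 0`. Then `n = 2 * n₁` for some `n₁ ≥ 2`, and
`G k m = n - k` for every `k` with `n₁ ≤ k < n`. -/
theorem goodstein_corollary6_1 (m n : ℕ) (hm : 2 ≤ m) (hn1 : 1 ≤ n) (hn : G n m = 0)
    (hmin : ∀ j : ℕ, 1 ≤ j → G j m = 0 → n ≤ j) :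
    ∃ n₁ : ℕ, 2 ≤ n₁ ∧ n = 2 * n₁ ∧ ∀ k : ℕ, n₁ ≤ k → k < n → G k m = n - k := by
  obtain ⟨k₀, hk₀, hG, hbefore⟩ := exists_G_eq_self hm hn1 (by omega : G n m ≤ n)
  have hafter : ∀ k, k₀ ≤ k → k ≤ 2 * k₀ → G k m = 2 * k₀ - k := fun k h₁ h₂ => by
    have := G_add_of_eq_self (by omega) hG (show k - k₀ ≤ k₀ by omega)
    rw [Nat.add_sub_cancel' h₁] at this
    omega
  have hle : n ≤ 2 * k₀ := hmin _ (by omega) (by simpa using hafter (2 * k₀) (by omega) le_rfl)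
  have hn_eq : n = 2 * k₀ := by
    by_contra hne
    rcases Nat.lt_or_ge n k₀ with h | h
    · have := hbefore n hn1 h
      omega
    · have := hafter n h hle
      omega
  subst hn_eq
  exact ⟨k₀, hk₀, rfl, fun k h₁ h₂ => hafter k h₁ h₂.le⟩
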